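/- arXiv:1704.00105 — 8 statements merged into one kernel-verified Lean document; each statement's English description precedes it below -/
import Mathlib

section
/- For any integer q ≥ 2, the set Σ_{2q+2}(±A_q), consisting of all sums of at most 2q+2 elements each of which is a_n or -a_n for some n ∈ ℕ (where a_n = q^n + n), contains the subgroup (q-1)ℤ of ℤ. In particular A_q is not sufficiently sparse. -/
/-- `Σ_n(±A)`: sums of at most `n` signed elements of `A`. -/
def SigmaPM (A : Set ℤ) (n : ℕ) : Set ℤ :=
  {x | ∃ k ≤ n, ∃ c : Fin k → ℤ, ∃ a : Fin k → ℤ,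
    (∀ i, c i = 1 ∨ c i = -1) ∧ (∀ i, a i ∈ A) ∧ x = ∑ i, c i * a i}

/-- `A` is sufficiently sparse if no `Σ_n(±A)` contains a nontrivial subgroup of `ℤ`. -/
def SuffSparse (A : Set ℤ) : Prop :=
  ∀ n : ℕ, ∀ H : AddSubgroup ℤ, (H : Set ℤ) ⊆ SigmaPM A n → H = ⊥

lemma sigma_aux (q : ℕ) (hq : 2 ≤ q) (z : ℤ) (hz : ((q : ℤ) - 1) ∣ z) :
    z ∈ SigmaPM {z : ℤ | ∃ n : ℕ, z = (q : ℤ) ^ n + n} (2 * q + 2) := by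
  obtain ⟨t, ht⟩ := hz
  set e : ℕ := t.toNat with he
  set f : ℕ := (-t).toNat with hf
  have hef : (e : ℤ) - (f : ℤ) = t := by omega
  -- coefficient and value functions on naturals
  set cnat : ℕ → ℤ := fun i =>
    if i < q then 1 else if i = q then -1 else if i < 2 * q + 1 then -1 else 1 with hc
  set anat : ℕ → ℤ := fun i =>
    if i < q then (q : ℤ) ^ e + e
    else if i = q then (q : ℤ) ^ (e + 1) + (e + 1)
    else if i < 2 * q + 1 then (q : ℤ) ^ f + f
    else (q : ℤ) ^ (f + 1) + (f + 1) with ha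
  refine ⟨2 * q + 2, le_refl _, fun i => cnat i.val, fun i => anat i.val, ?_, ?_, ?_⟩
  · intro i
    simp only [hc]
    split_ifs <;> simp
  · intro i
    simp only [ha]
    split_ifs
    · exact ⟨e, by push_cast; ring⟩
    · exact ⟨e + 1, by push_cast; ring⟩
    · exact ⟨f, by push_cast; ring⟩
    · exact ⟨f + 1, by push_cast; ring⟩
  · rw [Fin.sum_univ_eq_sum_range (fun i => cnat i * anat i) (2 * q + 2)]
    have h1 : ∀ i ∈ Finset.range q, cnat i * anat i = (q : ℤ) ^ e + e := by
      intro i hi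
      simp only [Finset.mem_range] at hi
      simp only [hc, ha, if_pos hi]
      ring
    have h2 : ∀ i ∈ Finset.Ico (q + 1) (2 * q + 1), cnat i * anat i = -((q : ℤ) ^ f + f) := by
      intro i hi
      simp only [Finset.mem_Ico] at hi
      have h3 : ¬ i < q := by omega
      have h4 : i ≠ q := by omega
      have h5 : i < 2 * q + 1 := hi.2
      simp only [hc, ha, if_neg h3, if_neg h4, if_pos h5]
      ring
    have hq' : cnat q * anat q = -((q : ℤ) ^ (e + 1) + (e + 1)) := by
      have h3 : ¬ q < q := lt_irrefl q
      simp only [hc, ha, if_neg h3, if_pos rfl, if_true]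
      ring
    have hlast : cnat (2 * q + 1) * anat (2 * q + 1) = (q : ℤ) ^ (f + 1) + (f + 1) := by
      have h3 : ¬ 2 * q + 1 < q := by omega
      have h4 : 2 * q + 1 ≠ q := by omega
      have h5 : ¬ 2 * q + 1 < 2 * q + 1 := by omega
      simp only [hc, ha, if_neg h3, if_neg h4, if_neg h5]
      ring
    have hsplit : Finset.range (2 * q + 2) =
        Finset.range (2 * q + 1) ∪ {2 * q + 1} := by
      ext i; simp [Finset.mem_range, Finset.mem_union]; omega
    have hsplit2 : Finset.range (2 * q + 1) =
        Finset.range q ∪ {q} ∪ Finset.Ico (q + 1) (2 * q + 1) := by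
      ext i; simp [Finset.mem_range, Finset.mem_union, Finset.mem_Ico]; omega
    have hd1 : Disjoint (Finset.range (2 * q + 1)) ({2 * q + 1} : Finset ℕ) := by
      simp [Finset.disjoint_singleton_right]
    have hd2 : Disjoint (Finset.range q) ({q} : Finset ℕ) := by
      simp [Finset.disjoint_singleton_right]
    have hd3 : Disjoint (Finset.range q ∪ {q}) (Finset.Ico (q + 1) (2 * q + 1)) := by
      rw [Finset.disjoint_left]
      intro i hi hi'
      simp [Finset.mem_union, Finset.mem_range] at hi
      simp [Finset.mem_Ico] at hi'
      omega
    rw [hsplit, Finset.sum_union hd1, hsplit2, Finset.sum_union hd3,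
      Finset.sum_union hd2, Finset.sum_congr rfl h1, Finset.sum_congr rfl h2,
      Finset.sum_const, Finset.sum_singleton, Finset.sum_singleton,
      Finset.sum_const, hq', hlast, Finset.card_range, Nat.card_Ico]
    have hcard : 2 * q + 1 - (q + 1) = q := by omega
    rw [hcard, ht, ← hef]
    push_cast
    rw [pow_succ, pow_succ]
    ring

/-- `Σ_{2q+2}(±A_q)` contains the subgroup `(q-1)ℤ`; in particular `A_q` is not
sufficiently sparse. -/
theorem stmt1 (q : ℕ) (hq : 2 ≤ q)
    (A : Set ℤ) (hA : A = {z : ℤ | ∃ n : ℕ, z = (q : ℤ) ^ n + n}) :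
    (∀ z : ℤ, ((q : ℤ) - 1) ∣ z → z ∈ SigmaPM A (2 * q + 2)) ∧ ¬ SuffSparse A := by
  subst hA
  refine ⟨fun z hz => sigma_aux q hq z hz, ?_⟩
  intro hs
  have hsub : ((AddSubgroup.zmultiples ((q : ℤ) - 1)) : Set ℤ) ⊆
      SigmaPM {z : ℤ | ∃ n : ℕ, z = (q : ℤ) ^ n + n} (2 * q + 2) := by
    intro x hx
    obtain ⟨k, hk⟩ := AddSubgroup.mem_zmultiples_iff.mp hx
    exact sigma_aux q hq x ⟨k, by rw [← hk]; push_cast [zsmul_eq_mul]; ring⟩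
  have hbot := hs (2 * q + 2) _ hsub
  have hmem : ((q : ℤ) - 1) ∈ AddSubgroup.zmultiples ((q : ℤ) - 1) :=
    AddSubgroup.mem_zmultiples _
  rw [hbot] at hmem
  simp [AddSubgroup.mem_bot] at hmem
  have : (2 : ℤ) ≤ (q : ℤ) := by exact_mod_cast hq
  omega
end

section
/- Fix an integer q ≥ 2. For integers x, y, we have y = q^x (with x ∈ ℕ) if and only if y ∈ q^ℕ, 0 ≤ x < y, and x + y ∈ A_q, where A_q = {q^n + n : n ∈ ℕ}. -/
/-! The key point is that `x + q ^ k` with `0 ≤ x < q ^ k` lies in `[q ^ k, q ^ (k + 1))`, and so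
does `q ^ n + n`. Such a window determines its exponent, so `x + q ^ k = q ^ n + n` forces
`k = n` and then `x = n`. -/

section

variable {R : Type*} [Semiring R] [LinearOrder R] [IsStrictOrderedRing R] {q : R}

theorem natCast_lt_pow_of_two_le (hq : 2 ≤ q) (n : ℕ) : (n : R) < q ^ n :=
  calc (n : R) < 2 ^ n := by exact_mod_cast Nat.lt_two_pow_self
    _ ≤ q ^ n := pow_le_pow_left₀ zero_le_two hq n

theorem add_pow_lt_pow_succ (hq : 2 ≤ q) {x : R} {k : ℕ} (hx : x < q ^ k) :
    x + q ^ k < q ^ (k + 1) :=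
  calc x + q ^ k < q ^ k * 2 := by rw [mul_two]; exact add_lt_add_of_lt_of_le hx le_rfl
    _ ≤ q ^ k * q := mul_le_mul_of_nonneg_left hq (pow_nonneg (zero_le_two.trans hq) k)
    _ = q ^ (k + 1) := (pow_succ q k).symm

theorem eq_of_pow_le_lt_pow_succ (hq : 1 < q) {z : R} {k n : ℕ}
    (hk : q ^ k ≤ z) (hk' : z < q ^ (k + 1)) (hn : q ^ n ≤ z) (hn' : z < q ^ (n + 1)) :
    k = n := by
  have hkn : k < n + 1 := (pow_lt_pow_iff_right₀ hq).mp (hk.trans_lt hn')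
  have hnk : n < k + 1 := (pow_lt_pow_iff_right₀ hq).mp (hn.trans_lt hk')
  omega

end

/-- For `q ≥ 2` and integers `x, y`: `y = q^x` (with `x ∈ ℕ`) iff `y ∈ q^ℕ`,
`0 ≤ x < y`, and `x + y ∈ A_q = {q^n + n : n ∈ ℕ}`. -/
theorem stmt3 (q : ℤ) (hq : 2 ≤ q) (x y : ℤ) :
    (∃ n : ℕ, x = (n : ℤ) ∧ y = q ^ n) ↔
      ((∃ k : ℕ, y = q ^ k) ∧ 0 ≤ x ∧ x < y ∧ ∃ n : ℕ, x + y = q ^ n + n) := by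
  constructor
  · rintro ⟨n, rfl, rfl⟩
    exact ⟨⟨n, rfl⟩, n.cast_nonneg, natCast_lt_pow_of_two_le hq n, n, add_comm _ _⟩
  · rintro ⟨⟨k, rfl⟩, hx0, hxk, n, hsum⟩
    have hn := natCast_lt_pow_of_two_le hq n
    have hkn : k = n := by
      refine eq_of_pow_le_lt_pow_succ (by linarith) (z := x + q ^ k) (by linarith)
        (add_pow_lt_pow_succ hq hxk) (by linarith [n.cast_nonneg (α := ℤ)]) ?_
      rw [hsum, add_comm]
      exact add_pow_lt_pow_succ hq hn
    subst hkn
    exact ⟨k, by linarith, rfl⟩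
end

section
/- Let Q be a set of integers ≥ 2 such that for all q, r ∈ Q, log_q r is rational. If Q is finite then there exists an integer b ≥ 2 such that every element of Q is a power of b. -/
/-!
Two integers `q, r ≥ 2` with `log_q r = m / n` rational satisfy `q ^ m = r ^ n`. Dividing the
exponents by their gcd makes them coprime, and then `q` and `r` are both powers of a common base
(a rational root of a natural number is a natural number). Starting from a common base `b` of all
but one element `x` of `Q`, the relation between `x` and some `q = b ^ i` gives `x ^ a = b ^ (i c)`,
so `x` and `b` are powers of a common base `d`, which then serves for all of `Q`.
-/

open Real

lemma Nat.exists_pow_eq_of_pow_eq_pow_of_coprime {q r a c : ℕ} (hac : a.Coprime c) (hc : c ≠ 0)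
    (h : q ^ a = r ^ c) : ∃ b, q = b ^ c ∧ r = b ^ a := by
  have hcast : (q : ℚ≥0) ^ a = r ^ c := by exact_mod_cast h
  obtain ⟨x, hqx, hrx⟩ := (pow_eq_pow_iff_of_coprime hac).1 hcast
  have hden : x.den = 1 := by
    have := congrArg NNRat.den hqx
    rwa [NNRat.den_natCast, NNRat.den_pow, eq_comm, pow_eq_one_iff_left hc] at this
  have hx : x = x.num := NNRat.ext_num_den rfl hden
  rw [hx] at hqx hrx
  exact ⟨x.num, by exact_mod_cast hqx, by exact_mod_cast hrx⟩

lemma Nat.exists_common_base_of_pow_eq_pow {q r a c : ℕ} (ha : a ≠ 0) (hc : c ≠ 0)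
    (h : q ^ a = r ^ c) : ∃ b u v, q = b ^ u ∧ r = b ^ v := by
  obtain ⟨a', c', hcop, ha', hc'⟩ := Nat.exists_coprime a c
  set g := a.gcd c
  have hg : g ≠ 0 := Nat.gcd_ne_zero_left ha
  have hc'0 : c' ≠ 0 := by rintro rfl; exact hc (by rw [hc', zero_mul])
  rw [ha', hc', pow_mul, pow_mul] at h
  obtain ⟨b, rfl, rfl⟩ :=
    Nat.exists_pow_eq_of_pow_eq_pow_of_coprime hcop hc'0 (Nat.pow_left_injective hg h)
  exact ⟨b, c', a', rfl, rfl⟩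

lemma Nat.two_le_of_two_le_pow {b n : ℕ} (h : 2 ≤ b ^ n) : 2 ≤ b := by
  by_contra! hb
  have : b ^ n ≤ 1 := pow_le_one₀ (Nat.zero_le b) (by omega)
  omega

lemma exists_pow_eq_pow_of_log_div_log_eq_ratCast {q r : ℕ} (hq : 1 < q) (hr : 1 < r) {s : ℚ}
    (hs : log r / log q = s) : ∃ a c : ℕ, a ≠ 0 ∧ c ≠ 0 ∧ q ^ a = r ^ c := by
  have hlq : 0 < log q := log_pos (by exact_mod_cast hq)
  have hlr : 0 < log r := log_pos (by exact_mod_cast hr)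
  have hs_pos : 0 < s := by exact_mod_cast hs ▸ div_pos hlr hlq
  have hnum : (s.num.natAbs : ℝ) = s * s.den := by
    rw [Nat.cast_natAbs, abs_of_pos (Rat.num_pos.2 hs_pos), Rat.cast_def]
    field_simp
  refine ⟨s.num.natAbs, s.den, Int.natAbs_ne_zero.2 (Rat.num_ne_zero.2 hs_pos.ne'), s.den_nz,
    ?_⟩
  have hlog : log ((q : ℝ) ^ s.num.natAbs) = log ((r : ℝ) ^ s.den) := by
    rw [log_pow, log_pow, hnum, ← hs]
    field_simp
  exact_mod_cast log_injOn_pos (by positivity : (0 : ℝ) < _) (by positivity : (0 : ℝ) < _) hlog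

theorem Finset.exists_common_base_of_pow_eq_pow (Q : Finset ℕ) (hQ : ∀ x ∈ Q, 2 ≤ x)
    (h : ∀ q ∈ Q, ∀ r ∈ Q, ∃ a c : ℕ, a ≠ 0 ∧ c ≠ 0 ∧ q ^ a = r ^ c) :
    ∃ b, 2 ≤ b ∧ ∀ x ∈ Q, ∃ n, x = b ^ n := by
  classical
  induction Q using Finset.induction_on with
  | empty => exact ⟨2, le_rfl, by simp⟩
  | insert x Q _ ih =>
    have hx : 2 ≤ x := hQ x (mem_insert_self x Q)
    obtain ⟨b, hb, hQb⟩ := ih (fun y hy ↦ hQ y (mem_insert_of_mem hy))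
      (fun q hq r hr ↦ h q (mem_insert_of_mem hq) r (mem_insert_of_mem hr))
    rcases Q.eq_empty_or_nonempty with rfl | ⟨q, hq⟩
    · exact ⟨x, hx, by simpa using ⟨1, (pow_one x).symm⟩⟩
    obtain ⟨i, rfl⟩ := hQb q hq
    have hi : i ≠ 0 := by
      rintro rfl
      simpa using hQ _ (mem_insert_of_mem hq)
    obtain ⟨a, c, ha, hc, hxq⟩ := h x (mem_insert_self x Q) _ (mem_insert_of_mem hq)
    obtain ⟨d, u, v, rfl, rfl⟩ :=
      Nat.exists_common_base_of_pow_eq_pow ha (mul_ne_zero hi hc) (by rw [hxq, pow_mul])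
    refine ⟨d, Nat.two_le_of_two_le_pow hb, fun y hy ↦ ?_⟩
    rcases mem_insert.1 hy with rfl | hy
    · exact ⟨u, rfl⟩
    · obtain ⟨n, rfl⟩ := hQb y hy
      exact ⟨v * n, (pow_mul d v n).symm⟩

/-- If `Q` is a finite set of integers `≥ 2` with `log_q r` rational for all `q, r ∈ Q`,
then there is an integer `b ≥ 2` such that every element of `Q` is a power of `b`. -/
theorem stmt8 (Q : Finset ℕ) (hQ : ∀ x ∈ Q, 2 ≤ x)
    (h : ∀ q ∈ Q, ∀ r ∈ Q, ∃ s : ℚ, Real.log r / Real.log q = (s : ℝ)) :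
    ∃ b : ℕ, 2 ≤ b ∧ ∀ x ∈ Q, ∃ n : ℕ, x = b ^ n := by
  refine Q.exists_common_base_of_pow_eq_pow hQ fun q hq r hr ↦ ?_
  obtain ⟨s, hs⟩ := h q hq r hr
  exact exists_pow_eq_pow_of_log_div_log_eq_ratCast (hQ q hq) (hQ r hr) hs
end

section
/- Let c_1, ..., c_t ≥ 2 be integers such that log_{c_i} c_j is irrational for all i ≠ j, and let A = ⋃_{i=1}^t c_i^ℕ. Then for each i, an integer x belongs to c_i^ℕ if and only if c_i^m · x ∈ A for all 1 ≤ m ≤ t. -/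
/-- For pairwise multiplicatively independent `c_1,...,c_t ≥ 2` and
`A = ⋃ c_i^ℕ`: `x ∈ c_i^ℕ` iff `c_i^m·x ∈ A` for all `1 ≤ m ≤ t`. -/
theorem stmt10 (t : ℕ) (c : Fin t → ℕ) (hc : ∀ i, 2 ≤ c i)
    (hind : ∀ i j, i ≠ j → ∀ m n : ℕ, 0 < m → 0 < n → (c i) ^ m ≠ (c j) ^ n)
    (A : Set ℤ) (hA : A = ⋃ i, {x : ℤ | ∃ n : ℕ, x = (c i : ℤ) ^ n})
    (i : Fin t) (x : ℤ) :
    (∃ n : ℕ, x = (c i : ℤ) ^ n) ↔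
      ∀ m : ℕ, 1 ≤ m → m ≤ t → (c i : ℤ) ^ m * x ∈ A := by
  subst hA
  constructor
  · rintro ⟨n, rfl⟩ m _ _
    refine Set.mem_iUnion.2 ⟨i, ⟨m + n, ?_⟩⟩
    rw [pow_add]
  · intro h
    have hci : (2 : ℤ) ≤ (c i : ℤ) := by exact_mod_cast hc i
    have key : ∀ m : Fin t, ∃ j : Fin t, ∃ n : ℕ,
        (c i : ℤ) ^ (m.val + 1) * x = (c j : ℤ) ^ n := by
      intro m
      have hm := h (m.val + 1) (by omega) (by have := m.isLt; omega)
      rw [Set.mem_iUnion] at hm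
      obtain ⟨j, n, hn⟩ := hm
      exact ⟨j, n, hn⟩
    choose j n hn using key
    by_cases hji : ∃ m, j m = i
    · obtain ⟨m, hm⟩ := hji
      have heq := hn m
      rw [hm] at heq
      have hpow : (0 : ℤ) < (c i : ℤ) ^ (m.val + 1) := by positivity
      have hpn : (0 : ℤ) < (c i : ℤ) ^ (n m) := by positivity
      have hx : 0 < x := by
        by_contra hx0
        push_neg at hx0
        nlinarith
      have hle : m.val + 1 ≤ n m := by
        by_contra hlt
        push_neg at hlt
        have h2 : (c i : ℤ) ^ (n m) < (c i : ℤ) ^ (m.val + 1) :=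
          pow_lt_pow_right₀ (by linarith) hlt
        nlinarith
      refine ⟨n m - (m.val + 1), ?_⟩
      have hcl : (c i : ℤ) ^ (m.val + 1) * x =
          (c i : ℤ) ^ (m.val + 1) * (c i : ℤ) ^ (n m - (m.val + 1)) := by
        rw [← pow_add, heq]
        congr 1
        omega
      exact mul_left_cancel₀ (by positivity) hcl
    · push_neg at hji
      exfalso
      have contra : ∀ a b : Fin t, a.val < b.val → j a = j b → False := by
        intro a b hlt hjab
        have hck : (2 : ℤ) ≤ (c (j a) : ℤ) := by exact_mod_cast hc (j a)
        have e : (c i : ℤ) ^ (b.val - a.val) * ((c i : ℤ) ^ (a.val + 1) * x) =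
            (c i : ℤ) ^ (b.val + 1) * x := by
          rw [← mul_assoc, ← pow_add]
          congr 2
          omega
        rw [hn a, hn b, ← hjab] at e
        -- e : c_i^{b-a} * c_k^{n a} = c_k^{n b}
        have hd : 0 < b.val - a.val := by omega
        have h2 : (2 : ℤ) ≤ (c i : ℤ) ^ (b.val - a.val) := by
          calc (2 : ℤ) ≤ (c i : ℤ) := hci
          _ ≤ (c i : ℤ) ^ (b.val - a.val) := le_self_pow₀ (by linarith) (by omega)
        have hpa : (0 : ℤ) < (c (j a) : ℤ) ^ (n a) := by positivity
        have hnn : n a < n b := by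
          by_contra hge
          push_neg at hge
          have : (c (j a) : ℤ) ^ (n b) ≤ (c (j a) : ℤ) ^ (n a) :=
            pow_le_pow_right₀ (by linarith) hge
          nlinarith
        have e2 : (c i : ℤ) ^ (b.val - a.val) * (c (j a) : ℤ) ^ (n a) =
            (c (j a) : ℤ) ^ (n b - n a) * (c (j a) : ℤ) ^ (n a) := by
          rw [← pow_add, e]
          congr 1
          omega
        have e3 : (c i : ℤ) ^ (b.val - a.val) = (c (j a) : ℤ) ^ (n b - n a) :=
          mul_right_cancel₀ (by positivity) e2
        have e4 : (c i) ^ (b.val - a.val) = (c (j a)) ^ (n b - n a) := by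
          exact_mod_cast e3
        exact hind i (j a) (Ne.symm (hji a)) _ _ hd (by omega) e4
      have hninj : ¬ Function.Injective j := by
        intro hinj
        obtain ⟨m, hm⟩ := Finite.injective_iff_surjective.mp hinj i
        exact hji m hm
      rw [Function.not_injective_iff] at hninj
      obtain ⟨a, b, hab, hne⟩ := hninj
      have hval : a.val ≠ b.val := fun hv => hne (Fin.ext hv)
      rcases Nat.lt_or_ge a.val b.val with hlt | hge
      · exact contra a b hlt hab
      · exact contra b a (by omega) hab.symm
end

section
/- Suppose Γ ⊆ ℂ* has the weighted sum property. Then ±Γ = {z : z ∈ Γ or -z ∈ Γ} does not contain arbitrarily long arithmetic progressions whose common difference is a positive integer. -/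
/-- `±Γ = Γ ∪ (-Γ)`. -/
def pmSet (Γ : Set ℂ) : Set ℂ := Γ ∪ (-Γ)

/-- Solutions in `(±Γ)^k` of `x_1 + ... + x_k = r` with all proper nonempty partial
sums nonzero. -/
def SolSet (Γ : Set ℂ) (k : ℕ) (r : ℤ) : Set (Fin k → ℂ) :=
  {x | (∀ i, x i ∈ pmSet Γ) ∧ (∑ i, x i) = (r : ℂ) ∧
    ∀ I : Finset (Fin k), I.Nonempty → I ≠ Finset.univ → ∑ i ∈ I, x i ≠ 0}

/-- The weighted sum property. -/
def WSP (Γ : Set ℂ) : Prop :=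
  ∀ k : ℕ, 1 ≤ k → ∃ n : ℕ, ∀ r : ℤ, 0 < r →
    (SolSet Γ k r).Finite ∧ (SolSet Γ k r).ncard ≤ n

lemma fin2_cases : ∀ i j m : Fin 2, i ≠ j → m = i ∨ m = j := by decide

lemma pmSet_neg {Γ : Set ℂ} {w : ℂ} (h : w ∈ pmSet Γ) : -w ∈ pmSet Γ := by
  simp only [pmSet, Set.mem_union, Set.mem_neg, neg_neg] at h ⊢
  tauto

lemma pmSet_ne_zero {Γ : Set ℂ} (h0 : (0 : ℂ) ∉ Γ) {w : ℂ} (h : w ∈ pmSet Γ) :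
    w ≠ 0 := by
  rintro rfl
  simp only [pmSet, Set.mem_union, Set.mem_neg, neg_zero] at h
  tauto

/-- If `Γ ⊆ ℂ*` has the weighted sum property, then `±Γ` does not contain arbitrarily
long arithmetic progressions with positive integer common difference. -/
theorem stmt11 (Γ : Set ℂ) (h0 : (0 : ℂ) ∉ Γ) (hwsp : WSP Γ) :
    ∃ L : ℕ, ¬ ∃ (z : ℂ) (d : ℤ), 0 < d ∧
      ∀ s : ℕ, s < L → z + (s : ℂ) * (d : ℂ) ∈ pmSet Γ := by
  obtain ⟨n, hn⟩ := hwsp 2 (by norm_num)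
  refine ⟨n + 2, ?_⟩
  rintro ⟨z, d, hd, hAP⟩
  obtain ⟨hfin, hcard⟩ := hn d hd
  have hdC : (d : ℂ) ≠ 0 := by
    exact_mod_cast (Int.cast_ne_zero (α := ℂ)).2 hd.ne'
  set f : ℕ → (Fin 2 → ℂ) := fun s => ![z + ((s : ℂ) + 1) * d, -(z + (s : ℂ) * d)] with hf
  have hmem : ∀ s < n + 1, f s ∈ SolSet Γ 2 d := by
    intro s hs
    have h1 : z + ((s : ℂ) + 1) * d ∈ pmSet Γ := by
      have h := hAP (s + 1) (by omega)
      have e : z + ((s + 1 : ℕ) : ℂ) * d = z + ((s : ℂ) + 1) * d := by push_cast; ring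
      rwa [e] at h
    have h2 : z + (s : ℂ) * d ∈ pmSet Γ := hAP s (by omega)
    refine ⟨?_, ?_, ?_⟩
    · intro i
      fin_cases i
      · exact h1
      · exact pmSet_neg h2
    · simp only [hf, Fin.sum_univ_two, Matrix.cons_val_zero, Matrix.cons_val_one,
        Matrix.head_cons]
      ring
    · intro I hne hIu
      obtain ⟨i, hi⟩ := hne
      obtain ⟨j, hj⟩ : ∃ j, j ∉ I := by
        by_contra h
        push_neg at h
        exact hIu (Finset.eq_univ_iff_forall.2 h)
      have hij : i ≠ j := fun h => hj (h ▸ hi)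
      have hIs : I = {i} := by
        apply Finset.eq_singleton_iff_unique_mem.2
        refine ⟨hi, fun m hm => ?_⟩
        have : m = i ∨ m = j := fin2_cases i j m hij
        rcases this with h | h
        · exact h
        · exact absurd (h ▸ hm) hj
      rw [hIs, Finset.sum_singleton]
      have : f s i ∈ pmSet Γ := by
        fin_cases i
        · exact h1
        · exact pmSet_neg h2
      exact pmSet_ne_zero h0 this
  have hinj : Set.InjOn f (Finset.range (n + 1)) := by
    intro a _ b _ hab
    have : f a 0 = f b 0 := by rw [hab]
    simp only [hf, Matrix.cons_val_zero] at this
    have h3 : ((a : ℂ) + 1) * d = ((b : ℂ) + 1) * d := by linear_combination this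
    have h4 : (a : ℂ) = (b : ℂ) := by
      have h5 := mul_right_cancel₀ hdC h3
      linear_combination h5
    exact_mod_cast h4
  have hsub : (Finset.range (n + 1)).image f ⊆ hfin.toFinset := by
    intro x hx
    obtain ⟨s, hs, rfl⟩ := Finset.mem_image.1 hx
    exact hfin.mem_toFinset.2 (hmem s (Finset.mem_range.1 hs))
  have hcard2 : n + 1 ≤ hfin.toFinset.card := by
    calc n + 1 = ((Finset.range (n + 1)).image f).card := by
          rw [Finset.card_image_of_injOn (by simpa using hinj), Finset.card_range]
      _ ≤ hfin.toFinset.card := Finset.card_le_card hsub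
  rw [Set.ncard_eq_toFinset_card _ hfin] at hcard
  omega
end

section
/- Suppose Γ ⊆ ℂ* has the weighted sum property. Then for every n ≥ 1, the set Σ_n(±Γ) of sums of at most n elements of ±Γ does not contain arbitrarily long arithmetic progressions whose common difference is a positive integer. -/
/-- `Σ_n(±Γ)`: sums of at most `n` elements of `±Γ`. -/
def SigmaPMC (Γ : Set ℂ) (n : ℕ) : Set ℂ :=
  {z | ∃ k ≤ n, ∃ x : Fin k → ℂ, (∀ i, x i ∈ pmSet Γ) ∧ z = ∑ i, x i}

/-!
Induction on `n`. Write two consecutive terms of a long progression in `Σ_{n+1}(±Γ)` with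
difference `d` as sums `X_s`, `X_{s+1}`. The formal difference `X_{s+1} - X_s` contains a
zero-sum-free subfamily `T_s` with sum `d`; it is a solution counted by the weighted sum property,
so the `T_s` range over a set whose size is bounded independently of `d`. Van der Waerden gives a
long progression `s = b + a i` on which `T_s` is constant. Removing the positive part of `T_s`
from every `X_{s+1}` (or, if it is empty, the nonempty negative part from every `X_s`) leaves
sums of at most `n` elements forming a progression with difference `a d`.
-/

section VanDerWaerden

open Filter Topology

-- A cluster point of colourings without long monochromatic progressions below `W`, for all `W`,
-- would be a colouring of `ℕ` contradicting the infinitary theorem.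
theorem exists_mono_arithProg (κ : Type*) [Finite κ] (l : ℕ) :
    ∃ W, ∀ C : ℕ → κ, ∃ a > 0, ∃ b c, b + a * l < W ∧ ∀ i < l, C (b + a * i) = c := by
  by_contra! h
  choose C hC using h
  let _ : TopologicalSpace κ := ⊥
  have : DiscreteTopology κ := ⟨rfl⟩
  obtain ⟨C₀, -, hC₀⟩ := isCompact_univ.exists_mapClusterPt (f := atTop) (u := C) (by simp)
  obtain ⟨a, ha, b, c, hmono⟩ := Combinatorics.exists_mono_homothetic_copy (Finset.range l) C₀
  have hnear : ∀ᶠ C' in 𝓝 C₀, ∀ i ∈ Finset.range l, C' (a * i + b) = C₀ (a * i + b) :=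
    (Finset.eventually_all _).2 fun i _ =>
      (continuous_apply _).continuousAt.eventually_mem ((isOpen_discrete {_}).mem_nhds rfl)
  obtain ⟨W, hW, hCW⟩ := ((hC₀.frequently hnear).and_eventually (eventually_gt_atTop _)).exists
  obtain ⟨i, hi, hne⟩ := hC W a ha b c hCW
  rw [add_comm, hW i (Finset.mem_range.2 hi), ← smul_eq_mul, hmono i (Finset.mem_range.2 hi)] at hne
  exact hne rfl

theorem exists_mono_arithProg_of_encard_le (c l : ℕ) :
    ∃ W, ∀ {κ : Type*} (C : ℕ → κ), (C '' Set.Iio W).encard ≤ c →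
      ∃ a > 0, ∃ b, b + a * l < W ∧ ∀ i < l, C (b + a * i) = C b := by
  obtain ⟨W, hW⟩ := exists_mono_arithProg (Fin (c + 1)) l
  refine ⟨W, fun C hC => ?_⟩
  obtain ⟨f, -, hf⟩ := (Set.finite_of_encard_le_coe hC).exists_injOn_of_encard_le
    (t := (Set.univ : Set (Fin (c + 1)))) (hC.trans (by simp))
  obtain ⟨a, ha, b, x, hlt, hx⟩ := hW (f ∘ C)
  have hmem : ∀ i < l, C (b + a * i) ∈ C '' Set.Iio W := fun i hi =>
    Set.mem_image_of_mem _ (by have := Nat.mul_le_mul_left a hi.le; simp only [Set.mem_Iio]; omega)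
  refine ⟨a, ha, b, hlt, fun i hi => hf (hmem i hi) (by simpa using hmem 0 (by omega)) ?_⟩
  simpa using (hx i hi).trans (hx 0 (by omega)).symm

end VanDerWaerden

namespace Multiset

variable {α G : Type*} [AddCommGroup G]

theorem exists_fin_map_eq {s : Multiset α} {k : ℕ} (h : card s = k) :
    ∃ f : Fin k → α, Finset.univ.val.map f = s := by
  obtain ⟨l, rfl⟩ := Quotient.exists_rep s
  obtain rfl : l.length = k := h
  exact ⟨l.get, by rw [Fin.univ_val_map, List.ofFn_get]; rfl⟩

def ZeroSumFree (g : α → G) (T : Multiset α) : Prop :=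
  ∀ T' ≤ T, T' ≠ 0 → (T'.map g).sum ≠ 0

theorem exists_le_zeroSumFree [DecidableEq α] (g : α → G) {D : Multiset α} {r : G}
    (h : (D.map g).sum = r) :
    ∃ T ≤ D, (T.map g).sum = r ∧ ZeroSumFree g T := by
  obtain ⟨T, ⟨hTD, hT⟩, hmin⟩ :=
    (InvImage.wf card wellFounded_lt).has_min {T | T ≤ D ∧ (T.map g).sum = r} ⟨D, le_rfl, h⟩
  refine ⟨T, hTD, hT, fun T' hT' hne hzero => hmin (T - T') ⟨tsub_le_self.trans hTD, ?_⟩ ?_⟩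
  · have := congrArg (fun S => (S.map g).sum) (tsub_add_cancel_of_le hT')
    simp only [map_add, sum_add, hzero, add_zero] at this
    rw [this, hT]
  · have := card_pos.2 hne
    have := card_le_card hT'
    change card (T - T') < card T
    rw [card_sub hT']
    omega

-- `tagUnion X Y` encodes the formal difference `X - Y`: `signed` reads a `true`-tagged entry as
-- itself and a `false`-tagged one as its negative.
def tagUnion (X Y : Multiset α) : Multiset (α × Bool) := X.map (·, true) + Y.map (·, false)

def trueFsts (T : Multiset (α × Bool)) : Multiset α := (T.filter (·.2 = true)).map Prod.fst

def falseFsts (T : Multiset (α × Bool)) : Multiset α := (T.filter (·.2 = false)).map Prod.fst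

def signed (p : G × Bool) : G := bif p.2 then p.1 else -p.1

theorem map_fst_tagUnion (X Y : Multiset α) : (tagUnion X Y).map Prod.fst = X + Y := by
  simp [tagUnion, map_map]

theorem trueFsts_tagUnion (X Y : Multiset α) : trueFsts (tagUnion X Y) = X := by
  simp [trueFsts, tagUnion, filter_map, map_map]

theorem falseFsts_tagUnion (X Y : Multiset α) : falseFsts (tagUnion X Y) = Y := by
  simp [falseFsts, tagUnion, filter_map, map_map]

theorem trueFsts_mono {S T : Multiset (α × Bool)} (h : S ≤ T) : trueFsts S ≤ trueFsts T :=
  map_le_map (filter_le_filter _ h)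

theorem falseFsts_mono {S T : Multiset (α × Bool)} (h : S ≤ T) : falseFsts S ≤ falseFsts T :=
  map_le_map (filter_le_filter _ h)

theorem sum_map_signed (T : Multiset (G × Bool)) :
    (T.map signed).sum = (trueFsts T).sum - (falseFsts T).sum := by
  induction T using Multiset.induction with
  | empty => simp [trueFsts, falseFsts]
  | cons p T ih =>
    simp only [trueFsts, falseFsts] at ih ⊢
    rcases p with ⟨x, _ | _⟩ <;>
      simp only [signed, map_cons, sum_cons, cond_false, cond_true, ih, filter_cons_of_pos,
        filter_cons_of_neg, Bool.false_eq_true, Bool.true_eq_false, not_false_eq_true] <;>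
      abel

def ofSignedFun {k : ℕ} (q : (Fin k → G) × (Fin k → Bool)) : Multiset (G × Bool) :=
  Finset.univ.val.map fun i => (signed (q.1 i, q.2 i), q.2 i)

theorem signed_signed (p : G × Bool) : signed (signed p, p.2) = p.1 := by
  rcases p with ⟨x, _ | _⟩ <;> simp [signed]

end Multiset

open Multiset

def IsSigmaRep (Γ : Set ℂ) (n : ℕ) (X : Multiset ℂ) (z : ℂ) : Prop :=
  (∀ x ∈ X, x ∈ pmSet Γ) ∧ card X ≤ n ∧ X.sum = z

theorem mem_SigmaPMC_iff {Γ : Set ℂ} {n : ℕ} {z : ℂ} :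
    z ∈ SigmaPMC Γ n ↔ ∃ X, IsSigmaRep Γ n X z := by
  constructor
  · rintro ⟨k, hk, x, hx, rfl⟩
    exact ⟨Finset.univ.val.map x, by simpa using fun i => hx i, by simpa using hk, rfl⟩
  · rintro ⟨X, hX, hcard, rfl⟩
    obtain ⟨f, hf⟩ := exists_fin_map_eq (s := X) rfl
    rw [← hf] at hX ⊢
    exact ⟨_, hcard, f, fun i => hX _ (mem_map_of_mem _ (Finset.mem_univ_val _)), rfl⟩

theorem SigmaPMC_zero (Γ : Set ℂ) : SigmaPMC Γ 0 = {0} := by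
  ext z
  simp [mem_SigmaPMC_iff, IsSigmaRep, eq_comm]

theorem IsSigmaRep.sub {Γ : Set ℂ} {m : ℕ} {X R : Multiset ℂ} {z : ℂ}
    (hX : IsSigmaRep Γ (m + 1) X z) (hR : R ≤ X) (hR0 : R ≠ 0) :
    IsSigmaRep Γ m (X - R) (z - R.sum) := by
  obtain ⟨hΓ, hcard, rfl⟩ := hX
  refine ⟨fun x hx => hΓ x (mem_of_le tsub_le_self hx), ?_, ?_⟩
  · have := card_pos.2 hR0
    rw [card_sub hR]
    omega
  · rw [eq_sub_iff_add_eq, ← sum_add, tsub_add_cancel_of_le hR]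

theorem neg_mem_pmSet {Γ : Set ℂ} {w : ℂ} (hw : w ∈ pmSet Γ) : -w ∈ pmSet Γ := by
  rcases hw with hw | hw
  · exact Or.inr (by simpa using hw)
  · exact Or.inl hw

theorem signed_mem_pmSet {Γ : Set ℂ} {p : ℂ × Bool} (hp : p.1 ∈ pmSet Γ) :
    signed p ∈ pmSet Γ := by
  rcases p with ⟨x, _ | _⟩
  · exact neg_mem_pmSet hp
  · exact hp

def signedSolutions (Γ : Set ℂ) (K : ℕ) (d : ℤ) : Set (Multiset (ℂ × Bool)) :=
  {T | (∀ p ∈ T, p.1 ∈ pmSet Γ) ∧ card T ≤ K ∧ (T.map signed).sum = d ∧ ZeroSumFree signed T}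

theorem mem_image_SolSet {Γ : Set ℂ} {K k : ℕ} {d : ℤ} {T : Multiset (ℂ × Bool)}
    (hT : T ∈ signedSolutions Γ K d) (hk : card T = k) :
    T ∈ ofSignedFun '' (SolSet Γ k d ×ˢ Set.univ) := by
  obtain ⟨hΓ, -, hsum, hfree⟩ := hT
  obtain ⟨f, rfl⟩ := exists_fin_map_eq hk
  refine ⟨(fun i => signed (f i), fun i => (f i).2),
    ⟨⟨fun i => ?_, ?_, fun I hI _ => ?_⟩, trivial⟩, ?_⟩
  · exact signed_mem_pmSet (hΓ _ (mem_map_of_mem _ (Finset.mem_univ_val _)))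
  · rw [map_map] at hsum
    exact hsum
  · simpa [map_map] using hfree (I.val.map f) (map_le_map (Finset.val_le_iff.2 I.subset_univ))
      (by simpa using hI.ne_empty)
  · simp [ofSignedFun, signed_signed]

theorem exists_encard_signedSolutions_le {Γ : Set ℂ} (hwsp : WSP Γ) (K : ℕ) :
    ∃ c : ℕ, ∀ d : ℤ, 0 < d → (signedSolutions Γ K d).encard ≤ c := by
  induction K with
  | zero =>
    refine ⟨0, fun d hd => ?_⟩
    suffices signedSolutions Γ 0 d = ∅ by simp [this]
    refine Set.eq_empty_of_forall_notMem fun T ⟨_, hcard, hsum, _⟩ => hd.ne' ?_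
    rw [card_eq_zero.1 (Nat.le_zero.1 hcard)] at hsum
    exact_mod_cast (by simpa using hsum : (0 : ℂ) = d).symm
  | succ K ih =>
    obtain ⟨c, hc⟩ := ih
    obtain ⟨N, hN⟩ := hwsp (K + 1) K.succ_pos
    refine ⟨c + N * 2 ^ (K + 1), fun d hd => ?_⟩
    calc (signedSolutions Γ (K + 1) d).encard
        ≤ (signedSolutions Γ K d ∪ ofSignedFun '' (SolSet Γ (K + 1) d ×ˢ Set.univ)).encard := by
          refine Set.encard_le_encard fun T hT => ?_
          rcases hT.2.1.lt_or_eq with hlt | heq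
          · exact Or.inl ⟨hT.1, Nat.lt_succ_iff.1 hlt, hT.2.2⟩
          · exact Or.inr (mem_image_SolSet hT heq)
      _ ≤ (signedSolutions Γ K d).encard +
            (SolSet Γ (K + 1) d ×ˢ (Set.univ : Set (Fin (K + 1) → Bool))).encard :=
          (Set.encard_union_le _ _).trans (add_le_add_right (Set.encard_image_le _ _) _)
      _ ≤ c + N * 2 ^ (K + 1) := by
          rw [Set.encard_prod, Set.encard_univ, ← (hN d hd).1.cast_ncard_eq]
          simp only [ENat.card_eq_coe_fintype_card, Fintype.card_fun, Fintype.card_bool,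
            Fintype.card_fin]
          push_cast
          gcongr
          · exact hc d hd
          · exact_mod_cast (hN d hd).2

def HasIntArithProg (S : Set ℂ) (L : ℕ) : Prop :=
  ∃ (z : ℂ) (d : ℤ), 0 < d ∧ ∀ s : ℕ, s < L → z + (s : ℂ) * (d : ℂ) ∈ S

theorem not_hasIntArithProg_SigmaPMC_zero (Γ : Set ℂ) : ¬ HasIntArithProg (SigmaPMC Γ 0) 2 := by
  rintro ⟨z, d, hd, hAP⟩
  have h0 : z = 0 := by simpa [SigmaPMC_zero] using hAP 0 (by omega)
  have h1 : z + d = 0 := by simpa [SigmaPMC_zero] using hAP 1 (by omega)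
  rw [h0, zero_add, Int.cast_eq_zero] at h1
  omega

theorem hasIntArithProg_of_forall_le {Γ : Set ℂ} {m L : ℕ} {Y : ℕ → Multiset ℂ} {R : Multiset ℂ}
    {w : ℂ} {e : ℤ} (he : 0 < e) (hR : R ≠ 0)
    (hY : ∀ i < L, IsSigmaRep Γ (m + 1) (Y i) (w + i * e)) (hRY : ∀ i < L, R ≤ Y i) :
    HasIntArithProg (SigmaPMC Γ m) L := by
  refine ⟨w - R.sum, e, he, fun i hi => mem_SigmaPMC_iff.2 ⟨Y i - R, ?_⟩⟩
  convert (hY i hi).sub (hRY i hi) hR using 1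
  ring

theorem hasIntArithProg_of_forall_le_tagUnion {Γ : Set ℂ} {m L a b : ℕ} {z : ℂ} {d : ℤ}
    (hd : 0 < d) (ha : 0 < a) {X : ℕ → Multiset ℂ}
    (hX : ∀ s ≤ b + a * L, IsSigmaRep Γ (m + 1) (X s) (z + s * d))
    {T : Multiset (ℂ × Bool)} (hT : (T.map signed).sum = d)
    (hTX : ∀ i < L, T ≤ tagUnion (X (b + a * i + 1)) (X (b + a * i))) :
    HasIntArithProg (SigmaPMC Γ m) L := by
  have hs : ∀ i < L, b + a * i + 1 ≤ b + a * L := fun i hi => by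
    have := Nat.mul_le_mul_left a (Nat.succ_le_of_lt hi)
    rw [Nat.mul_succ] at this
    omega
  rw [sum_map_signed] at hT
  by_cases hP : trueFsts T = 0
  · have hQ : falseFsts T ≠ 0 := by
      rintro hQ
      rw [hP, hQ] at hT
      exact hd.ne' (by exact_mod_cast (by simpa using hT : (0 : ℂ) = d).symm)
    refine hasIntArithProg_of_forall_le (mul_pos (Int.natCast_pos.2 ha) hd) hQ
      (w := z + b * d) (fun i hi => ?_)
      fun i hi => (falseFsts_mono (hTX i hi)).trans (falseFsts_tagUnion _ _).le
    convert hX (b + a * i) ((Nat.le_succ _).trans (hs i hi)) using 1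
    push_cast
    ring
  · refine hasIntArithProg_of_forall_le (mul_pos (Int.natCast_pos.2 ha) hd) hP
      (w := z + (b + 1) * d) (fun i hi => ?_)
      fun i hi => (trueFsts_mono (hTX i hi)).trans (trueFsts_tagUnion _ _).le
    convert hX (b + a * i + 1) (hs i hi) using 1
    push_cast
    ring

theorem exists_le_tagUnion_mem_signedSolutions {Γ : Set ℂ} {M : ℕ} {X₀ X₁ : Multiset ℂ}
    {z₀ z₁ : ℂ} {d : ℤ} (h₁ : IsSigmaRep Γ M X₁ z₁) (h₀ : IsSigmaRep Γ M X₀ z₀)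
    (hd : z₁ - z₀ = d) :
    ∃ T ≤ tagUnion X₁ X₀, T ∈ signedSolutions Γ (2 * M) d := by
  obtain ⟨hΓ₁, hcard₁, rfl⟩ := h₁
  obtain ⟨hΓ₀, hcard₀, rfl⟩ := h₀
  obtain ⟨T, hTD, hT, hfree⟩ := exists_le_zeroSumFree signed (D := tagUnion X₁ X₀)
    (by rw [sum_map_signed, trueFsts_tagUnion, falseFsts_tagUnion, hd])
  have hfst : T.map Prod.fst ≤ X₁ + X₀ := map_fst_tagUnion X₁ X₀ ▸ map_le_map hTD
  refine ⟨T, hTD, fun p hp => ?_, ?_, hT, hfree⟩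
  · rcases mem_add.1 (mem_of_le hfst (mem_map_of_mem _ hp)) with h | h
    exacts [hΓ₁ _ h, hΓ₀ _ h]
  · have := card_le_card hfst
    rw [card_map, card_add] at this
    omega

theorem exists_not_hasIntArithProg_succ {Γ : Set ℂ} (hwsp : WSP Γ) {m L : ℕ}
    (hL : ¬ HasIntArithProg (SigmaPMC Γ m) L) :
    ∃ L', ¬ HasIntArithProg (SigmaPMC Γ (m + 1)) L' := by
  obtain ⟨c, hc⟩ := exists_encard_signedSolutions_le hwsp (2 * (m + 1))
  obtain ⟨W, hW⟩ := exists_mono_arithProg_of_encard_le c L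
  refine ⟨W + 1, fun ⟨z, d, hd, hAP⟩ => hL ?_⟩
  simp only [mem_SigmaPMC_iff] at hAP
  choose! X hX using hAP
  have hdiff : ∀ s < W, ∃ T ≤ tagUnion (X (s + 1)) (X s),
      T ∈ signedSolutions Γ (2 * (m + 1)) d := fun s hs =>
    exists_le_tagUnion_mem_signedSolutions (hX (s + 1) (by omega)) (hX s (by omega))
      (by push_cast; ring)
  choose! T hTD hT using hdiff
  obtain ⟨a, ha, b, hbW, hmono⟩ := hW T
    ((Set.encard_le_encard (by rintro _ ⟨s, hs, rfl⟩; exact hT s hs)).trans (hc d hd))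
  refine hasIntArithProg_of_forall_le_tagUnion hd ha (fun s hs => hX s (by omega)) (hT b ?_).2.2.1
    fun i hi => hmono i hi ▸ hTD _ ?_
  · omega
  · have := Nat.mul_le_mul_left a hi.le
    omega

theorem stmt12_general (Γ : Set ℂ) (hwsp : WSP Γ) (n : ℕ) :
    ∃ L : ℕ, ¬ ∃ (z : ℂ) (d : ℤ), 0 < d ∧
      ∀ s : ℕ, s < L → z + (s : ℂ) * (d : ℂ) ∈ SigmaPMC Γ n := by
  induction n with
  | zero => exact ⟨2, not_hasIntArithProg_SigmaPMC_zero Γ⟩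
  | succ m ih =>
    obtain ⟨L, hL⟩ := ih
    exact exists_not_hasIntArithProg_succ hwsp hL

/-- If `Γ ⊆ ℂ*` has the weighted sum property then for every `n ≥ 1`, `Σ_n(±Γ)` does not
contain arbitrarily long arithmetic progressions with positive integer common difference. -/
theorem stmt12 (Γ : Set ℂ) (h0 : (0 : ℂ) ∉ Γ) (hwsp : WSP Γ) (n : ℕ) (hn : 1 ≤ n) :
    ∃ L : ℕ, ¬ ∃ (z : ℂ) (d : ℤ), 0 < d ∧
      ∀ s : ℕ, s < L → z + (s : ℂ) * (d : ℂ) ∈ SigmaPMC Γ n :=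
  stmt12_general Γ hwsp n
end

section
/- Let S ⊆ ℝ⁺ be such that {s/t : s, t ∈ S, t ≤ s} is closed and discrete in ℝ. Then for every k ≥ 1 there exists ε > 0 such that for all c ∈ {-1,1}^k and λ_1, ..., λ_k ∈ S, if ∑_{i∈I} c_i λ_i ≠ 0 for every nonempty I ⊆ {1,...,k}, then |c_1 λ_1 + ... + c_k λ_k| ≥ ε · max{λ_1, ..., λ_k}. -/
open Filter

open scoped Pointwise

/-- Iterated sumset: all sums of at most `n` elements of `G` (with repetition). -/
noncomputable def sumsW (G : Finset ℝ) : ℕ → Finset ℝ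
  | 0 => {0}
  | n + 1 => sumsW G n ∪ (sumsW G n + G)

lemma zero_mem_sumsW (G : Finset ℝ) : ∀ n, (0 : ℝ) ∈ sumsW G n
  | 0 => by simp [sumsW]
  | n + 1 => Finset.mem_union_left _ (zero_mem_sumsW G n)

lemma sum_mem_sumsW (G : Finset ℝ) {ι : Type} [DecidableEq ι] (f : ι → ℝ) :
    ∀ (n : ℕ) (T : Finset ι), T.card ≤ n → (∀ i ∈ T, f i ∈ G) →
      ∑ i ∈ T, f i ∈ sumsW G n
  | 0, T, hT, _ => by
      have hT0 : T = ∅ := Finset.card_eq_zero.mp (Nat.le_zero.mp hT)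
      subst hT0
      simp [sumsW]
  | n + 1, T, hT, hf => by
      rcases T.eq_empty_or_nonempty with rfl | ⟨i, hi⟩
      · simpa using zero_mem_sumsW G (n + 1)
      · rw [← Finset.sum_erase_add T f hi]
        have hcard : (T.erase i).card ≤ n := by
          have := Finset.card_erase_of_mem hi
          have h1 : 1 ≤ T.card := Finset.card_pos.mpr ⟨i, hi⟩
          omega
        have h1 : ∑ j ∈ T.erase i, f j ∈ sumsW G n :=
          sum_mem_sumsW G f n _ hcard (fun j hj => hf j (Finset.mem_of_mem_erase hj))
        exact Finset.mem_union_right _ (Finset.add_mem_add h1 (hf i hi))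

lemma aux14 (S : Set ℝ) (hS : ∀ s ∈ S, 0 < s)
    (hdisc : ∀ x : ℝ, ¬ AccPt x (𝓟 {r : ℝ | ∃ s ∈ S, ∃ t ∈ S, t ≤ s ∧ r = s / t})) :
    ∀ k : ℕ, ∃ ε : ℝ, 0 < ε ∧ ε ≤ 1 ∧ ∀ (ι : Type) (_ : DecidableEq ι)
      (c : ι → ℤ) (lam : ι → ℝ) (T : Finset ι),
      T.card ≤ k → (∀ i ∈ T, c i = 1 ∨ c i = -1) → (∀ i ∈ T, lam i ∈ S) →
      (∀ I ⊆ T, I.Nonempty → ∑ i ∈ I, (c i : ℝ) * lam i ≠ 0) →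
      ∀ j ∈ T, ε * lam j ≤ |∑ i ∈ T, (c i : ℝ) * lam i| := by
  -- finiteness of Q ∩ [1, B]
  set Q : Set ℝ := {r : ℝ | ∃ s ∈ S, ∃ t ∈ S, t ≤ s ∧ r = s / t} with hQ
  have finQ : ∀ B : ℝ, (Q ∩ Set.Icc 1 B).Finite := by
    intro B
    by_contra h
    have hinf : (Q ∩ Set.Icc 1 B).Infinite := h
    obtain ⟨x, -, hx⟩ := hinf.exists_accPt_of_subset_isCompact isCompact_Icc
      Set.inter_subset_right
    exact hdisc x (hx.mono (principal_mono.2 Set.inter_subset_left))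
  intro k
  induction k with
  | zero =>
      refine ⟨1, one_pos, le_refl 1, ?_⟩
      intro ι _ c lam T hT _ _ _ j hj
      have hT0 : T = ∅ := Finset.card_eq_zero.mp (Nat.le_zero.mp hT)
      subst hT0
      exact absurd hj (Finset.notMem_empty j)
  | succ k ih =>
      obtain ⟨ε', hε'pos, hε'le, hIH⟩ := ih
      set δ : ℝ := ε' / (2 * (k + 1)) with hδdef
      have hk1 : (0 : ℝ) < 2 * (k + 1) := by positivity
      have hδpos : 0 < δ := by positivity
      have hδhalf : δ ≤ 1 / 2 := by
        rw [hδdef, div_le_div_iff₀ hk1 two_pos]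
        nlinarith [Nat.cast_nonneg (α := ℝ) k]
      -- the finite set of possible normalized values
      have hFfin : (Q ∩ Set.Icc 1 (1 / δ)).Finite := finQ _
      set F : Set ℝ := Q ∩ Set.Icc 1 (1 / δ) with hF
      have hGfin : ((fun q : ℝ => 1 / q) '' F ∪ (fun q : ℝ => -(1 / q)) '' F).Finite :=
        (hFfin.image _).union (hFfin.image _)
      set Gf : Finset ℝ := hGfin.toFinset with hGf
      set W : Finset ℝ := sumsW Gf (k + 1) with hW
      set V : Finset ℝ := (W.filter (· ≠ 0)).image (fun x => |x|) with hV
      set η : ℝ := if h : V.Nonempty then V.min' h else 1 with hη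
      have hVpos : ∀ v ∈ V, 0 < v := by
        intro v hv
        rw [hV, Finset.mem_image] at hv
        obtain ⟨w, hw, rfl⟩ := hv
        rw [Finset.mem_filter] at hw
        exact abs_pos.mpr hw.2
      have hηpos : 0 < η := by
        rw [hη]
        split
        · next h => exact hVpos _ (V.min'_mem h)
        · exact one_pos
      have hηle : ∀ w ∈ W, w ≠ 0 → η ≤ |w| := by
        intro w hw hw0
        have hmem : |w| ∈ V := by
          rw [hV, Finset.mem_image]
          exact ⟨w, Finset.mem_filter.mpr ⟨hw, hw0⟩, rfl⟩
        rw [hη, dif_pos ⟨_, hmem⟩]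
        exact Finset.min'_le _ _ hmem
      refine ⟨min (ε' / 2) η, lt_min (by positivity) hηpos, le_trans (min_le_left _ _)
        (by linarith), ?_⟩
      intro ι _ c lam T hcard hc hlam hne j hj
      have hTne : T.Nonempty := ⟨j, hj⟩
      obtain ⟨m, hm, hmax⟩ := T.exists_max_image lam hTne
      have hM : 0 < lam m := hS _ (hlam m hm)
      have hjM : lam j ≤ lam m := hmax j hj
      have hεpos : 0 < min (ε' / 2) η := lt_min (by positivity) hηpos
      have key : min (ε' / 2) η * lam m ≤ |∑ i ∈ T, (c i : ℝ) * lam i| := by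
        classical
        by_cases hall : ∀ i ∈ T, δ * lam m ≤ lam i
        · -- all terms are large: use finiteness / minimum η
          have hmemG : ∀ i ∈ T, ((c i : ℝ) * lam i) / lam m ∈ Gf := by
            intro i hi
            have hli : 0 < lam i := hS _ (hlam i hi)
            have hqQ : lam m / lam i ∈ Q := ⟨lam m, hlam m hm, lam i, hlam i hi,
              hmax i hi, rfl⟩
            have hq1 : 1 ≤ lam m / lam i := (one_le_div hli).mpr (hmax i hi)
            have hq2 : lam m / lam i ≤ 1 / δ := by
              rw [div_le_div_iff₀ hli hδpos]
              nlinarith [hall i hi]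
            have hqF : lam m / lam i ∈ F := ⟨hqQ, hq1, hq2⟩
            have hinv : 1 / (lam m / lam i) = lam i / lam m := one_div_div _ _
            rw [hGf, Set.Finite.mem_toFinset]
            rcases hc i hi with h1 | h1
            · refine Or.inl ⟨lam m / lam i, hqF, ?_⟩
              show 1 / (lam m / lam i) = _
              rw [hinv, h1]; push_cast; ring
            · refine Or.inr ⟨lam m / lam i, hqF, ?_⟩
              show -(1 / (lam m / lam i)) = _
              rw [hinv, h1]; push_cast; ring
          have hsumW : (∑ i ∈ T, (c i : ℝ) * lam i) / lam m ∈ W := by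
            rw [Finset.sum_div]
            exact sum_mem_sumsW Gf _ (k + 1) T hcard hmemG
          have hne0 : (∑ i ∈ T, (c i : ℝ) * lam i) / lam m ≠ 0 :=
            div_ne_zero (hne T Finset.Subset.rfl hTne) (ne_of_gt hM)
          have := hηle _ hsumW hne0
          rw [abs_div, abs_of_pos hM] at this
          have h2 : η * lam m ≤ |∑ i ∈ T, (c i : ℝ) * lam i| := by
            rw [← le_div_iff₀ hM] at *
            exact this
          calc min (ε' / 2) η * lam m ≤ η * lam m :=
                mul_le_mul_of_nonneg_right (min_le_right _ _) hM.le
            _ ≤ _ := h2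
        · -- some term is small: use induction hypothesis on the large part
          push_neg at hall
          obtain ⟨i0, hi0T, hi0s⟩ := hall
          set Tb : Finset ι := T.filter (fun i => δ * lam m ≤ lam i) with hTb
          have hTbsub : Tb ⊆ T := Finset.filter_subset _ _
          have hi0nb : i0 ∉ Tb := by
            rw [hTb, Finset.mem_filter]
            push_neg
            intro _
            linarith
          have hTbcard : Tb.card ≤ k := by
            have hss : Tb ⊂ T := Finset.ssubset_iff_of_subset hTbsub |>.mpr
              ⟨i0, hi0T, hi0nb⟩
            have := Finset.card_lt_card hss
            omega
          have hmTb : m ∈ Tb := by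
            rw [hTb, Finset.mem_filter]
            exact ⟨hm, by nlinarith⟩
          have hbig := hIH ι ‹_› c lam Tb hTbcard
            (fun i hi => hc i (hTbsub hi)) (fun i hi => hlam i (hTbsub hi))
            (fun I hI hIne => hne I (hI.trans hTbsub) hIne) m hmTb
          -- bound on the small part
          set Ts : Finset ι := T.filter (fun i => ¬ δ * lam m ≤ lam i) with hTs
          have hsplit : (∑ i ∈ Tb, (c i : ℝ) * lam i) + ∑ i ∈ Ts, (c i : ℝ) * lam i
              = ∑ i ∈ T, (c i : ℝ) * lam i :=
            Finset.sum_filter_add_sum_filter_not T _ _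
          have hsmall : |∑ i ∈ Ts, (c i : ℝ) * lam i| ≤ (ε' / 2) * lam m := by
            have h1 : |∑ i ∈ Ts, (c i : ℝ) * lam i| ≤ ∑ i ∈ Ts, δ * lam m := by
              refine le_trans (Finset.abs_sum_le_sum_abs _ _) (Finset.sum_le_sum ?_)
              intro i hi
              rw [hTs, Finset.mem_filter] at hi
              have hli : 0 < lam i := hS _ (hlam i hi.1)
              have : |(c i : ℝ)| = 1 := by
                rcases hc i hi.1 with h | h <;> rw [h] <;> norm_num
              rw [abs_mul, this, one_mul, abs_of_pos hli]
              linarith [hi.2]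
            have h2 : ∑ i ∈ Ts, δ * lam m = Ts.card * (δ * lam m) := by
              rw [Finset.sum_const, nsmul_eq_mul]
            have h3 : (Ts.card : ℝ) ≤ (k + 1 : ℝ) := by
              have : Ts.card ≤ T.card := Finset.card_le_card (Finset.filter_subset _ _)
              have : Ts.card ≤ k + 1 := le_trans this hcard
              exact_mod_cast this
            have h4 : ((k : ℝ) + 1) * δ = ε' / 2 := by
              rw [hδdef]
              field_simp
            have h5 : (Ts.card : ℝ) * (δ * lam m) ≤ ((k : ℝ) + 1) * (δ * lam m) := by
              have := mul_pos hδpos hM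
              push_cast at h3
              nlinarith
            calc |∑ i ∈ Ts, (c i : ℝ) * lam i| ≤ Ts.card * (δ * lam m) := by
                  rw [← h2]; exact h1
              _ ≤ ((k : ℝ) + 1) * (δ * lam m) := h5
              _ = (ε' / 2) * lam m := by rw [← mul_assoc, h4]
          have htri : |∑ i ∈ Tb, (c i : ℝ) * lam i| ≤
              |∑ i ∈ T, (c i : ℝ) * lam i| + |∑ i ∈ Ts, (c i : ℝ) * lam i| := by
            have : (∑ i ∈ Tb, (c i : ℝ) * lam i) =
                (∑ i ∈ T, (c i : ℝ) * lam i) - ∑ i ∈ Ts, (c i : ℝ) * lam i := by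
              rw [← hsplit]; ring
            rw [this]
            exact abs_sub _ _
          have hεm : min (ε' / 2) η * lam m ≤ (ε' / 2) * lam m :=
            mul_le_mul_of_nonneg_right (min_le_left _ _) hM.le
          have : ε' * lam m ≤ |∑ i ∈ T, (c i : ℝ) * lam i| + (ε' / 2) * lam m := by
            calc ε' * lam m ≤ |∑ i ∈ Tb, (c i : ℝ) * lam i| := hbig
              _ ≤ _ := le_trans htri (by linarith)
          linarith
      calc min (ε' / 2) η * lam j ≤ min (ε' / 2) η * lam m :=
            mul_le_mul_of_nonneg_left hjM hεpos.le
        _ ≤ _ := key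

/-- If `S ⊆ ℝ⁺` has `{s/t : s,t ∈ S, t ≤ s}` closed and discrete, then for every `k ≥ 1`
there is `ε > 0` such that every sum `∑ c_i λ_i` with `c_i ∈ {±1}`, `λ_i ∈ S`, and all
nonempty partial sums nonzero, satisfies `|∑ c_i λ_i| ≥ ε · max λ_i`. -/
theorem stmt14 (S : Set ℝ) (hS : ∀ s ∈ S, 0 < s)
    (hclosed : IsClosed {r : ℝ | ∃ s ∈ S, ∃ t ∈ S, t ≤ s ∧ r = s / t})
    (hdisc : ∀ x : ℝ, ¬ AccPt x (𝓟 {r : ℝ | ∃ s ∈ S, ∃ t ∈ S, t ≤ s ∧ r = s / t}))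
    (k : ℕ) (hk : 1 ≤ k) :
    ∃ ε : ℝ, 0 < ε ∧ ∀ (c : Fin k → ℤ) (lam : Fin k → ℝ),
      (∀ i, c i = 1 ∨ c i = -1) → (∀ i, lam i ∈ S) →
      (∀ I : Finset (Fin k), I.Nonempty → ∑ i ∈ I, (c i : ℝ) * lam i ≠ 0) →
      ∀ j : Fin k, ε * lam j ≤ |∑ i, (c i : ℝ) * lam i| := by
  obtain ⟨ε, hεpos, -, h⟩ := aux14 S hS hdisc k
  refine ⟨ε, hεpos, ?_⟩
  intro c lam hc hlam hne j
  exact h (Fin k) inferInstance c lam Finset.univ (by simp) (fun i _ => hc i)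
    (fun i _ => hlam i) (fun I _ hIne => hne I hIne) j (Finset.mem_univ j)
end

section
/- Let (λ_n)_{n=0}^∞ be a strictly increasing sequence of positive reals with inf_n λ_{n+1}/λ_n = b > 1. Let A = (a_n)_{n=0}^∞ ⊆ ℕ and suppose there exist ε > 0 and N such that for every x ∈ B (where B consists of positive integers expressible as c_1 a_{n_1} + ... + c_l a_{n_l} with l ≤ k, c_i ∈ {-1,1}, and all proper nonempty partial sums nonzero) with witness max index f(x) ≥ N, one has x ≥ ε λ_{f(x)}. Then |B ∩ [1,n]| is O((log n)^{k+1}); in particular d*(B) = 0. -/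
open Filter Topology

lemma pad_sum (k l : ℕ) (hlk : l ≤ k) (a : ℕ → ℕ) (c : Fin l → ℤ) (m : Fin l → ℕ) :
    ∑ i : Fin k, (if h : (i : ℕ) < l then c ⟨i, h⟩ else 0) *
      (a (if h : (i : ℕ) < l then m ⟨i, h⟩ else 0) : ℤ)
      = ∑ i : Fin l, c i * (a (m i) : ℤ) := by
  classical
  set g : ℕ → ℤ := fun j => if h : j < l then c ⟨j, h⟩ * (a (m ⟨j, h⟩) : ℤ) else 0 with hg
  have h1 : ∀ i : Fin k, (if h : (i : ℕ) < l then c ⟨i, h⟩ else 0) *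
      (a (if h : (i : ℕ) < l then m ⟨i, h⟩ else 0) : ℤ) = g i := by
    intro i
    by_cases h : (i : ℕ) < l <;> simp [hg, h]
  rw [Finset.sum_congr rfl fun i _ => h1 i, Fin.sum_univ_eq_sum_range]
  rw [← Finset.sum_subset (Finset.range_subset_range.mpr hlk) (fun j _ hj => by
    simp only [Finset.mem_range, not_lt] at hj
    simp [hg, not_lt.mpr hj])]
  rw [← Fin.sum_univ_eq_sum_range]
  exact Finset.sum_congr rfl fun i _ => by simp [hg, i.isLt]

/-- Counting bound for signed sums close to a geometric sequence: if every large element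
`x` of `B` satisfies `x ≥ ε λ_{f(x)}`, where `f(x)` is the maximal index in a
representation of `x`, then `|B ∩ [1,n]|` is `O((log n)^{k+1})`, so `d*(B) = 0`. -/
theorem stmt15 (lam : ℕ → ℝ) (hpos : ∀ n, 0 < lam n) (hmono : StrictMono lam)
    (b : ℝ) (hb : 1 < b)
    (hglb : IsGLB {r : ℝ | ∃ n : ℕ, r = lam (n + 1) / lam n} b)
    (k : ℕ) (hk : 1 ≤ k) (a : ℕ → ℕ)
    (B : Set ℤ)
    (hB : B = {x : ℤ | 0 < x ∧ ∃ l : ℕ, l ≤ k ∧ ∃ c : Fin l → ℤ, ∃ m : Fin l → ℕ,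
      (∀ i, c i = 1 ∨ c i = -1) ∧
      (∀ I : Finset (Fin l), I.Nonempty → I ≠ Finset.univ →
        ∑ i ∈ I, c i * (a (m i) : ℤ) ≠ 0) ∧
      x = ∑ i, c i * (a (m i) : ℤ)})
    (f : ℤ → ℕ)
    (hf : ∀ x ∈ B, ∃ l : ℕ, l ≤ k ∧ ∃ c : Fin l → ℤ, ∃ m : Fin l → ℕ,
      (∀ i, c i = 1 ∨ c i = -1) ∧
      (∀ I : Finset (Fin l), I.Nonempty → I ≠ Finset.univ →
        ∑ i ∈ I, c i * (a (m i) : ℤ) ≠ 0) ∧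
      x = ∑ i, c i * (a (m i) : ℤ) ∧ f x = Finset.univ.sup m)
    (ε : ℝ) (hε : 0 < ε) (N : ℕ)
    (hbound : ∀ x ∈ B, N ≤ f x → ε * lam (f x) ≤ (x : ℝ)) :
    (∃ C : ℝ, 0 < C ∧ ∀ n : ℕ, 2 ≤ n →
      (Set.ncard (B ∩ Set.Icc 1 (n : ℤ)) : ℝ) ≤ C * Real.log n ^ (k + 1)) ∧
    Filter.limsup (fun n : ℕ => (Set.ncard (B ∩ Set.Icc 1 (n : ℤ)) : ℝ) / n)
      Filter.atTop = 0 := by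
  classical
  have hbpos : (0 : ℝ) < b := lt_trans one_pos hb
  have hLb : 0 < Real.log b := Real.log_pos hb
  have hlog2 : 0 < Real.log 2 := Real.log_pos one_lt_two
  have hratio : ∀ j, b * lam j ≤ lam (j + 1) := by
    intro j
    have h := hglb.1 ⟨j, rfl⟩
    rwa [le_div_iff₀ (hpos j)] at h
  have hgeom : ∀ j, lam 0 * b ^ j ≤ lam j := by
    intro j
    induction j with
    | zero => simp
    | succ j ih =>
      have h1 : lam 0 * b ^ (j + 1) = (lam 0 * b ^ j) * b := by ring
      have h2 : (lam 0 * b ^ j) * b ≤ lam j * b :=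
        mul_le_mul_of_nonneg_right ih hbpos.le
      calc lam 0 * b ^ (j + 1) = (lam 0 * b ^ j) * b := h1
        _ ≤ lam j * b := h2
        _ = b * lam j := mul_comm _ _
        _ ≤ lam (j + 1) := hratio j
  choose l hlk c m hc hI hrep hfx using hf
  -- the index bound
  set T : ℕ → ℕ := fun n =>
    max N ⌈(Real.log n - Real.log (ε * lam 0)) / Real.log b⌉₊ with hT
  have hεl0 : 0 < ε * lam 0 := mul_pos hε (hpos 0)
  have hfle : ∀ n : ℕ, ∀ x, x ∈ B → x ∈ Set.Icc 1 (n : ℤ) → f x ≤ T n := by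
    intro n x hxB hxI
    by_cases hN : f x < N
    · exact le_trans hN.le (le_max_left _ _)
    · push_neg at hN
      have h1 : ε * lam (f x) ≤ (x : ℝ) := hbound x hxB hN
      have h2 : (x : ℝ) ≤ (n : ℝ) := by exact_mod_cast hxI.2
      have h3 : lam 0 * b ^ f x ≤ lam (f x) := hgeom _
      have h4 : ε * lam 0 * b ^ f x ≤ (n : ℝ) := by nlinarith
      have h5 : Real.log (ε * lam 0 * b ^ f x) ≤ Real.log n :=
        Real.log_le_log (by positivity) h4
      rw [Real.log_mul (ne_of_gt hεl0) (by positivity), Real.log_pow] at h5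
      have h6 : (f x : ℝ) ≤ (Real.log n - Real.log (ε * lam 0)) / Real.log b := by
        rw [le_div_iff₀ hLb]; push_cast; linarith
      have h7 : f x ≤ ⌈(Real.log n - Real.log (ε * lam 0)) / Real.log b⌉₊ := by
        have := Nat.ceil_mono h6
        simpa using this
      exact le_trans h7 (le_max_right _ _)
  -- counting bound
  have hcount : ∀ n : ℕ, (B ∩ Set.Icc 1 (n : ℤ)).ncard ≤ 3 ^ k * (T n + 1) ^ k := by
    intro n
    set t : Finset ((Fin k → ℤ) × (Fin k → ℕ)) :=
      (Fintype.piFinset fun _ => ({-1, 0, 1} : Finset ℤ)) ×ˢ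
        (Fintype.piFinset fun _ => Finset.range (T n + 1)) with ht
    set ρ : ((Fin k → ℤ) × (Fin k → ℕ)) → ℤ := fun p => ∑ i, p.1 i * (a (p.2 i) : ℤ)
      with hρ
    have hsub : B ∩ Set.Icc 1 (n : ℤ) ⊆ ρ '' ↑t := by
      rintro x ⟨hxB, hxI⟩
      refine ⟨(fun i => if h : (i : ℕ) < l x hxB then c x hxB ⟨i, h⟩ else 0,
        fun i => if h : (i : ℕ) < l x hxB then m x hxB ⟨i, h⟩ else 0), ?_, ?_⟩
      · rw [Finset.mem_coe, ht, Finset.mem_product]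
        constructor
        · rw [Fintype.mem_piFinset]
          intro i
          by_cases h : (i : ℕ) < l x hxB
          · rcases hc x hxB ⟨i, h⟩ with h1 | h1 <;> simp [h, h1]
          · simp [h]
        · rw [Fintype.mem_piFinset]
          intro i
          rw [Finset.mem_range]
          dsimp only
          by_cases h : (i : ℕ) < l x hxB
          · rw [dif_pos h]
            have hm : m x hxB ⟨i, h⟩ ≤ Finset.univ.sup (m x hxB) :=
              Finset.le_sup (Finset.mem_univ _)
            have : m x hxB ⟨i, h⟩ ≤ f x := by rw [hfx x hxB]; exact hm
            exact Nat.lt_succ_of_le (this.trans (hfle n x hxB hxI))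
          · rw [dif_neg h]; exact Nat.succ_pos _
      · exact (pad_sum k _ (hlk x hxB) a _ _).trans (hrep x hxB).symm
    calc (B ∩ Set.Icc 1 (n : ℤ)).ncard ≤ (ρ '' ↑t).ncard :=
          Set.ncard_le_ncard hsub (t.finite_toSet.image ρ)
      _ = (t.image ρ).card := by rw [← Finset.coe_image, Set.ncard_coe_finset]
      _ ≤ t.card := Finset.card_image_le
      _ = 3 ^ k * (T n + 1) ^ k := by
          rw [ht, Finset.card_product, Fintype.card_piFinset, Fintype.card_piFinset]
          simp [Finset.card_range]
  -- real analytic bound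
  set c1 : ℝ := |Real.log (ε * lam 0)| with hc1
  have hc1nn : 0 ≤ c1 := abs_nonneg _
  set E : ℝ := ((N : ℝ) + 2 + c1 / Real.log b) / Real.log 2 + 1 / Real.log b with hE
  have hEpos : 0 < E := by
    have h1 : 0 ≤ ((N : ℝ) + 2 + c1 / Real.log b) / Real.log 2 := by positivity
    have h2 : 0 < 1 / Real.log b := by positivity
    rw [hE]
    linarith
  set C : ℝ := 3 ^ k * E ^ k / Real.log 2 with hC
  have hCpos : 0 < C := by positivity
  have key : ∀ n : ℕ, 2 ≤ n →
      (Set.ncard (B ∩ Set.Icc 1 (n : ℤ)) : ℝ) ≤ C * Real.log n ^ (k + 1) := by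
    intro n hn
    have hln2 : Real.log 2 ≤ Real.log n :=
      Real.log_le_log two_pos (by exact_mod_cast hn)
    have hlnpos : 0 < Real.log n := lt_of_lt_of_le hlog2 hln2
    set ln : ℝ := Real.log n with hln
    set R : ℝ := (Real.log n - Real.log (ε * lam 0)) / Real.log b with hR
    have hRle : R ≤ (ln + c1) / Real.log b := by
      rw [hR]
      gcongr
      linarith [neg_abs_le (Real.log (ε * lam 0))]
    have hceil : (⌈R⌉₊ : ℝ) ≤ (ln + c1) / Real.log b + 1 := by
      by_cases h : R ≤ 0
      · rw [Nat.ceil_eq_zero.mpr h]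
        have : (0 : ℝ) ≤ (ln + c1) / Real.log b := by positivity
        linarith
      · push_neg at h
        have := Nat.ceil_lt_add_one h.le
        linarith
    have hTle : (T n : ℝ) + 1 ≤ E * ln := by
      have h1 : (T n : ℝ) ≤ (N : ℝ) + (⌈R⌉₊ : ℝ) := by
        rw [hT]
        push_cast [Nat.cast_max]
        exact max_le (le_add_of_nonneg_right (Nat.cast_nonneg _))
          (le_add_of_nonneg_left (Nat.cast_nonneg _))
      have h2 : (T n : ℝ) + 1 ≤ ((N : ℝ) + 2 + c1 / Real.log b) + ln / Real.log b := by
        have : (ln + c1) / Real.log b = ln / Real.log b + c1 / Real.log b := add_div _ _ _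
        linarith
      have h3 : ((N : ℝ) + 2 + c1 / Real.log b) + ln / Real.log b
          ≤ ((N : ℝ) + 2 + c1 / Real.log b) * (ln / Real.log 2) + ln / Real.log b := by
        have hone : (1 : ℝ) ≤ ln / Real.log 2 := (one_le_div hlog2).mpr hln2
        have hbase : (0 : ℝ) ≤ (N : ℝ) + 2 + c1 / Real.log b := by positivity
        nlinarith
      have h4 : ((N : ℝ) + 2 + c1 / Real.log b) * (ln / Real.log 2) + ln / Real.log b
          = E * ln := by rw [hE]; ring
      exact h4 ▸ (h2.trans h3)
    have hTnn : (0 : ℝ) ≤ (T n : ℝ) + 1 := by positivity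
    calc ((B ∩ Set.Icc 1 (n : ℤ)).ncard : ℝ)
        ≤ ((3 ^ k * (T n + 1) ^ k : ℕ) : ℝ) := by exact_mod_cast hcount n
      _ = 3 ^ k * ((T n : ℝ) + 1) ^ k := by push_cast; ring
      _ ≤ 3 ^ k * (E * ln) ^ k := by gcongr
      _ = 3 ^ k * E ^ k * ln ^ k := by rw [mul_pow]; ring
      _ ≤ C * ln ^ (k + 1) := by
          rw [hC, pow_succ, div_mul_eq_mul_div, le_div_iff₀ hlog2]
          have hnn : (0 : ℝ) ≤ 3 ^ k * E ^ k * ln ^ k := by positivity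
          calc 3 ^ k * E ^ k * ln ^ k * Real.log 2
              ≤ 3 ^ k * E ^ k * ln ^ k * ln := by
                exact mul_le_mul_of_nonneg_left hln2 hnn
            _ = 3 ^ k * E ^ k * (ln ^ k * ln) := by ring
  refine ⟨⟨C, hCpos, key⟩, ?_⟩
  have h0 : Tendsto (fun n : ℕ => C * (Real.log n ^ (k + 1) / n)) atTop (𝓝 0) := by
    have h1 := (Real.tendsto_pow_log_div_mul_add_atTop 1 0 (k + 1) one_ne_zero).comp
      (tendsto_natCast_atTop_atTop (R := ℝ))
    have h2 := h1.const_mul C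
    simpa [Function.comp] using h2
  have hls : Tendsto (fun n : ℕ => (Set.ncard (B ∩ Set.Icc 1 (n : ℤ)) : ℝ) / n)
      atTop (𝓝 0) := by
    apply squeeze_zero' (Eventually.of_forall fun n => by positivity) ?_ h0
    filter_upwards [eventually_ge_atTop 2] with n hn
    have hn0 : (0 : ℝ) < (n : ℝ) := by
      have : (0 : ℕ) < n := by omega
      exact_mod_cast this
    calc (Set.ncard (B ∩ Set.Icc 1 (n : ℤ)) : ℝ) / n
        ≤ (C * Real.log n ^ (k + 1)) / n := by gcongr; exact key n hn
      _ = C * (Real.log n ^ (k + 1) / n) := mul_div_assoc _ _ _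
  exact hls.limsup_eq
end
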